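/- Let N_T, d, N_y ≥ 1 be integers, Δt a nonzero real number and p ∈ ℝ. Let 𝔸, 𝕄, M^Γ be d×d complex matrices and Q_a, Q_b be N_y×d complex matrices, and let α ∈ ℂ. Let 𝐀 be the N_T×N_T block matrix with d×d blocks whose diagonal blocks all equal 𝔸, whose (n,s) block for s < n is (−1)^{n−s}·(4i/Δt)·𝕄, and whose blocks above the diagonal are zero, and set 𝐁 = −ip·blockdiag_{N_T}(M^Γ). Assume 𝐀 − 𝐁 is invertible. Then X := α·I − 2ip·blockdiag_{N_T}(Q_a)·(𝐀 − 𝐁)^{−1}·blockdiag_{N_T}(M^Γ)·blockdiag_{N_T}(Q_b)^⊤, viewed as an N_T×N_T block matrix with N_y×N_y blocks x_{n,s}, is block lower triangular and satisfies x_{n,s} = x_{n−1,s−1} for all 2 ≤ s ≤ n ≤ N_T. -/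

import Mathlib

/-! Call a block matrix lower block-Toeplitz if its `(n, s)` block is `f (n - s)` for `s ≤ n`
and zero for `s > n`, for some kernel `f`. Such matrices are closed under sums, scalar multiples
and block products (the kernel of a product is the convolution of the kernels). With square blocks
they form a finite-dimensional subalgebra of the full matrix algebra, which is Artinian, so an
element invertible in the full algebra, being regular, is already a unit of the subalgebra. Since
`𝐀 - 𝐁`, the block diagonal matrices and the identity are lower block-Toeplitz, so is `X`. -/

open Matrix Complex

/-- An `N×N` block matrix with `a×b` blocks is block lower triangular if all
blocks strictly above the diagonal vanish. -/
def IsBlockLowerTriangular {N a b : ℕ}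
    (X : Matrix (Fin N × Fin a) (Fin N × Fin b) ℂ) : Prop :=
  ∀ (n s : Fin N) (i : Fin a) (j : Fin b), n < s → X (n, i) (s, j) = 0

/-- The `N×N` block diagonal matrix all of whose diagonal blocks equal `P`. -/
def blockdiag (N : ℕ) {a b : ℕ} (P : Matrix (Fin a) (Fin b) ℂ) :
    Matrix (Fin N × Fin a) (Fin N × Fin b) ℂ :=
  fun x y => if x.1 = y.1 then P x.2 y.2 else 0

/-- The global-in-time Crank–Nicolson matrix `𝐀` with constant diagonal block `𝔸`,
subdiagonal `(n,s)` blocks `(-1)^(n-s) (4i/Δt) 𝕄` for `s < n`, and zero blocks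
above the diagonal. -/
noncomputable def bigA (N_T d : ℕ) (Δt : ℝ) (𝔸 𝕄 : Matrix (Fin d) (Fin d) ℂ) :
    Matrix (Fin N_T × Fin d) (Fin N_T × Fin d) ℂ :=
  fun x y =>
    if x.1 = y.1 then 𝔸 x.2 y.2
    else if y.1 < x.1 then
      (-1 : ℂ) ^ ((x.1 : ℕ) - (y.1 : ℕ)) * (4 * Complex.I / (Δt : ℂ)) * 𝕄 x.2 y.2
    else 0

open Finset

theorem Finset.sum_range_ite_mem_Icc {M : Type*} [AddCommMonoid M] {s n N : ℕ} (hn : n < N)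
    (F : ℕ → M) :
    ∑ m ∈ range N, (if s ≤ m ∧ m ≤ n then F m else 0) = ∑ m ∈ Icc s n, F m := by
  rw [← sum_filter]
  congr 1
  ext m
  simp only [mem_filter, mem_range, mem_Icc]
  omega

theorem Subalgebra.nonsing_inv_mem {K n : Type*} [Field K] [Fintype n] [DecidableEq n]
    (S : Subalgebra K (Matrix n n K)) {A : Matrix n n K} (hA : A ∈ S) : A⁻¹ ∈ S := by
  by_cases hdet : IsUnit A.det
  · have : IsArtinianRing S := .of_finite K S
    have hreg : IsRightRegular (⟨A, hA⟩ : S) := fun x y hxy =>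
      Subtype.ext ((A.isUnit_iff_isUnit_det.mpr hdet).isRegular.right (congrArg Subtype.val hxy))
    obtain ⟨u, hu⟩ := IsArtinianRing.isUnit_iff_isRightRegular.mpr hreg
    have hinv : A⁻¹ = ((u⁻¹ : Sˣ) : S) := by
      refine Matrix.inv_eq_right_inv ?_
      have := congrArg Subtype.val u.mul_inv
      rwa [hu] at this
    exact hinv ▸ (u⁻¹ : Sˣ).1.2
  · rw [Matrix.nonsing_inv_apply_not_isUnit A hdet]
    exact S.zero_mem

section LowerBlockToeplitz

variable {R : Type*} {N a b c : ℕ}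

def IsLowerBlockToeplitz [Zero R] (X : Matrix (Fin N × Fin a) (Fin N × Fin b) R) : Prop :=
  ∃ f : ℕ → Matrix (Fin a) (Fin b) R,
    ∀ n s i j, X (n, i) (s, j) = if s ≤ n then f ((n : ℕ) - s) i j else 0

theorem IsLowerBlockToeplitz.of_apply_eq_ite [Zero R]
    {X : Matrix (Fin N × Fin a) (Fin N × Fin b) R}
    (P : Matrix (Fin a) (Fin b) R) (g : ℕ → Matrix (Fin a) (Fin b) R)
    (hX : ∀ n s i j, X (n, i) (s, j) =
      if n = s then P i j else if s < n then g ((n : ℕ) - s) i j else 0) :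
    IsLowerBlockToeplitz X := by
  refine ⟨fun k => if k = 0 then P else g k, fun n s i j => ?_⟩
  rcases lt_trichotomy n s with h | rfl | h
  · simp [hX, h.ne, h.not_gt, h.not_ge]
  · simp [hX]
  · simp [hX, h.ne', h, h.le, Nat.sub_ne_zero_of_lt (Fin.lt_def.mp h)]

theorem IsLowerBlockToeplitz.add [AddZeroClass R]
    {X Y : Matrix (Fin N × Fin a) (Fin N × Fin b) R}
    (hX : IsLowerBlockToeplitz X) (hY : IsLowerBlockToeplitz Y) : IsLowerBlockToeplitz (X + Y) := by
  obtain ⟨f, hf⟩ := hX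
  obtain ⟨g, hg⟩ := hY
  exact ⟨f + g, fun n s i j => by simp only [Matrix.add_apply, hf, hg]; split_ifs <;> simp⟩

theorem IsLowerBlockToeplitz.sub [AddGroup R]
    {X Y : Matrix (Fin N × Fin a) (Fin N × Fin b) R}
    (hX : IsLowerBlockToeplitz X) (hY : IsLowerBlockToeplitz Y) : IsLowerBlockToeplitz (X - Y) := by
  obtain ⟨f, hf⟩ := hX
  obtain ⟨g, hg⟩ := hY
  exact ⟨f - g, fun n s i j => by simp only [Matrix.sub_apply, hf, hg]; split_ifs <;> simp⟩

theorem IsLowerBlockToeplitz.smul [MulZeroClass R] (r : R)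
    {X : Matrix (Fin N × Fin a) (Fin N × Fin b) R}
    (hX : IsLowerBlockToeplitz X) : IsLowerBlockToeplitz (r • X) := by
  obtain ⟨f, hf⟩ := hX
  exact ⟨r • f, fun n s i j => by simp only [Matrix.smul_apply, hf]; split_ifs <;> simp⟩

theorem isLowerBlockToeplitz_one [Zero R] [One R] :
    IsLowerBlockToeplitz (1 : Matrix (Fin N × Fin a) (Fin N × Fin a) R) :=
  .of_apply_eq_ite 1 0 fun n s i j => by
    by_cases h : n = s <;> simp [one_apply, h]

theorem IsLowerBlockToeplitz.mul [NonUnitalNonAssocSemiring R]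
    {X : Matrix (Fin N × Fin a) (Fin N × Fin b) R} {Y : Matrix (Fin N × Fin b) (Fin N × Fin c) R}
    (hX : IsLowerBlockToeplitz X) (hY : IsLowerBlockToeplitz Y) : IsLowerBlockToeplitz (X * Y) := by
  obtain ⟨f, hf⟩ := hX
  obtain ⟨g, hg⟩ := hY
  refine ⟨fun t => ∑ u ∈ range (t + 1), f (t - u) * g u, fun n s i j => ?_⟩
  have hblock : ∀ m : Fin N, ∑ k, X (n, i) (m, k) * Y (m, k) (s, j) =
      if (s : ℕ) ≤ m ∧ (m : ℕ) ≤ n then (f (n - m) * g (m - s)) i j else 0 := by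
    intro m
    simp only [hf, hg, mul_apply, Fin.le_iff_val_le_val]
    split_ifs <;> simp_all
  rw [mul_apply, Fintype.sum_prod_type, Finset.sum_congr rfl fun m _ => hblock m,
    Fin.sum_univ_eq_sum_range
      (fun m => if (s : ℕ) ≤ m ∧ m ≤ n then (f (n - m) * g (m - s)) i j else 0),
    sum_range_ite_mem_Icc n.isLt]
  split_ifs with hsn <;> rw [Fin.le_iff_val_le_val] at hsn
  · dsimp only
    rw [Matrix.sum_apply, ← Ico_add_one_right_eq_Icc, sum_Ico_eq_sum_range,
      show (n : ℕ) + 1 - s = n - s + 1 by omega]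
    refine sum_congr rfl fun u _ => ?_
    rw [← Nat.sub_sub, Nat.add_sub_cancel_left]
  · rw [Finset.Icc_eq_empty hsn, sum_empty]

variable (R) in
def lowerBlockToeplitz [CommSemiring R] (N d : ℕ) :
    Subalgebra R (Matrix (Fin N × Fin d) (Fin N × Fin d) R) where
  carrier := {X | IsLowerBlockToeplitz X}
  mul_mem' := IsLowerBlockToeplitz.mul
  add_mem' := IsLowerBlockToeplitz.add
  algebraMap_mem' r := by
    rw [Set.mem_ofPred_eq, Algebra.algebraMap_eq_smul_one]
    exact isLowerBlockToeplitz_one.smul r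

theorem IsLowerBlockToeplitz.nonsing_inv {K : Type*} [Field K] {d : ℕ}
    {A : Matrix (Fin N × Fin d) (Fin N × Fin d) K} (hA : IsLowerBlockToeplitz A) :
    IsLowerBlockToeplitz A⁻¹ :=
  (lowerBlockToeplitz K N d).nonsing_inv_mem hA

theorem IsLowerBlockToeplitz.apply_eq_apply_pred [Zero R]
    {X : Matrix (Fin N × Fin a) (Fin N × Fin b) R} (hX : IsLowerBlockToeplitz X)
    (n s : Fin N) (i : Fin a) (j : Fin b) (hs : 1 ≤ (s : ℕ)) (hsn : s ≤ n) :
    X (n, i) (s, j) = X (⟨(n : ℕ) - 1, Nat.lt_of_le_of_lt (Nat.sub_le _ _) n.isLt⟩, i)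
      (⟨(s : ℕ) - 1, Nat.lt_of_le_of_lt (Nat.sub_le _ _) s.isLt⟩, j) := by
  obtain ⟨f, hf⟩ := hX
  have hsn' : (s : ℕ) ≤ n := hsn
  rw [hf, hf, if_pos hsn, if_pos (Fin.mk_le_mk.mpr (by omega)),
    show (n : ℕ) - s = (n - 1) - (s - 1) by omega]

theorem IsLowerBlockToeplitz.isBlockLowerTriangular
    {X : Matrix (Fin N × Fin a) (Fin N × Fin b) ℂ} (hX : IsLowerBlockToeplitz X) :
    IsBlockLowerTriangular X := by
  obtain ⟨f, hf⟩ := hX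
  intro n s i j hns
  rw [hf, if_neg hns.not_ge]

theorem isLowerBlockToeplitz_blockdiag (P : Matrix (Fin a) (Fin b) ℂ) :
    IsLowerBlockToeplitz (blockdiag N P) :=
  .of_apply_eq_ite P 0 fun n s i j => by simp [blockdiag]

theorem blockdiag_transpose (P : Matrix (Fin a) (Fin b) ℂ) :
    (blockdiag N P)ᵀ = blockdiag N Pᵀ := by
  ext x y
  simp [blockdiag, eq_comm]

theorem isLowerBlockToeplitz_bigA {d : ℕ} (Δt : ℝ) (𝔸 𝕄 : Matrix (Fin d) (Fin d) ℂ) :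
    IsLowerBlockToeplitz (bigA N d Δt 𝔸 𝕄) :=
  .of_apply_eq_ite 𝔸 (fun k => ((-1) ^ k * (4 * Complex.I / Δt)) • 𝕄) fun n s i j => by
    simp [bigA]

end LowerBlockToeplitz

theorem robin_interface_block_structure_general (N_T d N_y : ℕ)
    (Δt : ℝ) (p : ℝ) (α : ℂ)
    (𝔸 𝕄 MΓ : Matrix (Fin d) (Fin d) ℂ)
    (Qa Qb : Matrix (Fin N_y) (Fin d) ℂ) :
    IsBlockLowerTriangular
      (α • (1 : Matrix (Fin N_T × Fin N_y) (Fin N_T × Fin N_y) ℂ)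
        - (2 * Complex.I * (p : ℂ)) •
          (blockdiag N_T Qa
            * (bigA N_T d Δt 𝔸 𝕄 - (-(Complex.I * (p : ℂ))) • blockdiag N_T MΓ)⁻¹
            * blockdiag N_T MΓ * (blockdiag N_T Qb)ᵀ))
    ∧ ∀ (n s : Fin N_T) (i j : Fin N_y), 1 ≤ (s : ℕ) → s ≤ n →
        (α • (1 : Matrix (Fin N_T × Fin N_y) (Fin N_T × Fin N_y) ℂ)
          - (2 * Complex.I * (p : ℂ)) •
            (blockdiag N_T Qa
              * (bigA N_T d Δt 𝔸 𝕄 - (-(Complex.I * (p : ℂ))) • blockdiag N_T MΓ)⁻¹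
              * blockdiag N_T MΓ * (blockdiag N_T Qb)ᵀ)) (n, i) (s, j)
        = (α • (1 : Matrix (Fin N_T × Fin N_y) (Fin N_T × Fin N_y) ℂ)
            - (2 * Complex.I * (p : ℂ)) •
              (blockdiag N_T Qa
                * (bigA N_T d Δt 𝔸 𝕄 - (-(Complex.I * (p : ℂ))) • blockdiag N_T MΓ)⁻¹
                * blockdiag N_T MΓ * (blockdiag N_T Qb)ᵀ))
            (⟨(n : ℕ) - 1, Nat.lt_of_le_of_lt (Nat.sub_le _ _) n.isLt⟩, i)
            (⟨(s : ℕ) - 1, Nat.lt_of_le_of_lt (Nat.sub_le _ _) s.isLt⟩, j) := by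
  have hA : IsLowerBlockToeplitz
      (bigA N_T d Δt 𝔸 𝕄 - (-(Complex.I * (p : ℂ))) • blockdiag N_T MΓ) :=
    (isLowerBlockToeplitz_bigA Δt 𝔸 𝕄).sub ((isLowerBlockToeplitz_blockdiag MΓ).smul _)
  have hQb : IsLowerBlockToeplitz (blockdiag N_T Qb)ᵀ := by
    rw [blockdiag_transpose]
    exact isLowerBlockToeplitz_blockdiag Qbᵀ
  have hX := (isLowerBlockToeplitz_one.smul α).sub
    ((((isLowerBlockToeplitz_blockdiag Qa).mul hA.nonsing_inv).mul
      (isLowerBlockToeplitz_blockdiag MΓ)).mul hQb |>.smul (2 * Complex.I * (p : ℂ)))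
  exact ⟨hX.isBlockLowerTriangular, hX.apply_eq_apply_pred⟩

/-- Interface blocks for the Robin transmission condition with a
time-independent potential: with `𝐁 = -ip blockdiag(M^Γ)` and `𝐀 - 𝐁` invertible,
`X = α I - 2ip blockdiag(Q_a) (𝐀 - 𝐁)⁻¹ blockdiag(M^Γ) blockdiag(Q_b)ᵀ` is block
lower triangular and satisfies `x_{n,s} = x_{n-1,s-1}` for all `2 ≤ s ≤ n ≤ N_T`
(here 0-based: `1 ≤ s ≤ n`). -/
theorem robin_interface_block_structure (N_T d N_y : ℕ)
    (hNT : 1 ≤ N_T) (hd : 1 ≤ d) (hNy : 1 ≤ N_y)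
    (Δt : ℝ) (hΔt : Δt ≠ 0) (p : ℝ) (α : ℂ)
    (𝔸 𝕄 MΓ : Matrix (Fin d) (Fin d) ℂ)
    (Qa Qb : Matrix (Fin N_y) (Fin d) ℂ)
    (hinv : IsUnit (bigA N_T d Δt 𝔸 𝕄
      - (-(Complex.I * (p : ℂ))) • blockdiag N_T MΓ)) :
    IsBlockLowerTriangular
      (α • (1 : Matrix (Fin N_T × Fin N_y) (Fin N_T × Fin N_y) ℂ)
        - (2 * Complex.I * (p : ℂ)) •
          (blockdiag N_T Qa
            * (bigA N_T d Δt 𝔸 𝕄 - (-(Complex.I * (p : ℂ))) • blockdiag N_T MΓ)⁻¹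
            * blockdiag N_T MΓ * (blockdiag N_T Qb)ᵀ))
    ∧ ∀ (n s : Fin N_T) (i j : Fin N_y), 1 ≤ (s : ℕ) → s ≤ n →
        (α • (1 : Matrix (Fin N_T × Fin N_y) (Fin N_T × Fin N_y) ℂ)
          - (2 * Complex.I * (p : ℂ)) •
            (blockdiag N_T Qa
              * (bigA N_T d Δt 𝔸 𝕄 - (-(Complex.I * (p : ℂ))) • blockdiag N_T MΓ)⁻¹
              * blockdiag N_T MΓ * (blockdiag N_T Qb)ᵀ)) (n, i) (s, j)
        = (α • (1 : Matrix (Fin N_T × Fin N_y) (Fin N_T × Fin N_y) ℂ)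
            - (2 * Complex.I * (p : ℂ)) •
              (blockdiag N_T Qa
                * (bigA N_T d Δt 𝔸 𝕄 - (-(Complex.I * (p : ℂ))) • blockdiag N_T MΓ)⁻¹
                * blockdiag N_T MΓ * (blockdiag N_T Qb)ᵀ))
            (⟨(n : ℕ) - 1, Nat.lt_of_le_of_lt (Nat.sub_le _ _) n.isLt⟩, i)
            (⟨(s : ℕ) - 1, Nat.lt_of_le_of_lt (Nat.sub_le _ _) s.isLt⟩, j) :=
  robin_interface_block_structure_general N_T d N_y Δt p α 𝔸 𝕄 MΓ Qa Qb
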